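/- (Multiplication formula for Apostol–Bernoulli polynomials.) Let n ≥ 2 be an integer, λ ∈ ℂ with λ^n ≠ 1, q ∈ ℂ, and m ≥ 0 an integer. Then B_m(nq,λ) = n^{m-1} Σ_{j=0}^{n-1} λ^j B_m(q + j/n, λ^n). -/

import Mathlib

open Finset

/-- `expPS q = e^{qt} = Σ_j q^j t^j / j!` as a formal power series in `ℂ[[t]]`. -/
noncomputable def expPS (q : ℂ) : PowerSeries ℂ :=
  PowerSeries.mk fun j => q ^ j / j.factorial

lemma expPS_eq_rescale (q : ℂ) : expPS q = PowerSeries.rescale q (PowerSeries.exp ℂ) := by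
  ext k
  simp [expPS, PowerSeries.coeff_exp, div_eq_mul_inv]

lemma expPS_mul (a b : ℂ) : expPS a * expPS b = expPS (a + b) := by
  simp only [expPS_eq_rescale]
  exact PowerSeries.exp_mul_exp_eq_exp_add a b

lemma expPS_pow (k : ℕ) : (expPS 1) ^ k = expPS k := by
  induction k with
  | zero => ext j; simp [expPS, PowerSeries.coeff_one]; rcases j with _|j <;> simp
  | succ k ih =>
    rw [pow_succ, ih, expPS_mul]
    push_cast; ring_nf

lemma constantCoeff_expPS (a : ℂ) : PowerSeries.constantCoeff (expPS a) = 1 := by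
  simp [expPS, ← PowerSeries.coeff_zero_eq_constantCoeff]

lemma rescale_C' (c a : ℂ) : PowerSeries.rescale c (PowerSeries.C a) = PowerSeries.C a := by
  ext k
  simp only [PowerSeries.coeff_rescale, PowerSeries.coeff_C]
  split_ifs with h <;> simp [h]

lemma rescale_expPS (c a : ℂ) :
    PowerSeries.rescale c (expPS a) = expPS (a * c) := by
  simp [expPS_eq_rescale, PowerSeries.rescale_rescale]

/-- Multiplication formula for Apostol–Bernoulli polynomials:
`B_m(nq,λ) = n^{m-1} Σ_{j=0}^{n-1} λ^j B_m(q + j/n, λ^n)`,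
where `B m q λ` denotes the Apostol–Bernoulli polynomial `B_m(q,λ)`. -/
theorem apostol_bernoulli_multiplication_formula
    (B : ℕ → ℂ → ℂ → ℂ)
    (hB : ∀ (q lam : ℂ), lam ≠ 1 →
      (PowerSeries.C lam * expPS 1 - 1) *
          PowerSeries.mk (fun m => B m q lam / m.factorial)
        = PowerSeries.X * expPS q)
    (n : ℕ) (hn : 2 ≤ n) (lam : ℂ) (hlam : lam ^ n ≠ 1) (q : ℂ) (m : ℕ) :
    B m ((n : ℂ) * q) lam
      = (n : ℂ) ^ ((m : ℤ) - 1) *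
          ∑ j ∈ Finset.range n, lam ^ j * B m (q + j / n) (lam ^ n) := by
  have hn0 : (n : ℂ) ≠ 0 := Nat.cast_ne_zero.mpr (by omega)
  have hlam1 : lam ≠ 1 := fun h => hlam (by simp [h])
  set E : PowerSeries ℂ := PowerSeries.C lam * expPS 1 with hE
  set A := E - 1 with hA
  have hA0 : A ≠ 0 := by
    intro h
    apply hlam1
    have h' := congrArg (PowerSeries.constantCoeff) h
    simpa [hA, hE, constantCoeff_expPS, sub_eq_zero] using h'
  have hEn : E ^ n = PowerSeries.C (lam ^ n) * expPS n := by
    rw [hE, mul_pow, expPS_pow, map_pow]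
  have hEn0 : E ^ n - 1 ≠ 0 := by
    intro h
    have := congrArg (PowerSeries.constantCoeff) h
    apply hlam
    have h' := congrArg (PowerSeries.constantCoeff) h
    rw [hEn] at h'
    simpa [constantCoeff_expPS, sub_eq_zero] using h'
  -- generating series for each j, rescaled by n
  set G : ℕ → PowerSeries ℂ := fun j =>
    PowerSeries.rescale (n : ℂ) (PowerSeries.mk fun m => B m (q + j / n) (lam ^ n) / m.factorial)
    with hG
  have key : ∀ j : ℕ, (E ^ n - 1) * ((PowerSeries.C lam) ^ j * G j)
      = PowerSeries.C (n:ℂ) * PowerSeries.X * expPS ((n : ℂ) * q) * E ^ j := by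
    intro j
    have h1 := hB (q + j / n) (lam ^ n) hlam
    have h2 := congrArg (PowerSeries.rescale (n : ℂ)) h1
    rw [map_mul, map_mul, map_sub, map_mul] at h2
    have hq : (q + (j : ℂ) / n) * n = (n : ℂ) * q + j := by
      field_simp
    rw [rescale_C', map_one, PowerSeries.rescale_X, rescale_expPS, rescale_expPS,
      one_mul, hq, ← expPS_mul] at h2
    have h2' : (PowerSeries.C (lam ^ n) * expPS (n:ℂ) - 1) * G j
        = PowerSeries.C (n:ℂ) * PowerSeries.X * (expPS ((n:ℂ) * q) * expPS (j:ℂ)) := by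
      simp only [hG]; exact h2
    calc (E ^ n - 1) * ((PowerSeries.C lam) ^ j * G j)
        = (PowerSeries.C lam) ^ j * ((PowerSeries.C (lam ^ n) * expPS n - 1) * G j) := by
          rw [hEn]; ring
      _ = (PowerSeries.C lam) ^ j *
            (PowerSeries.C (n:ℂ) * PowerSeries.X * (expPS ((n:ℂ)*q) * expPS j)) := by rw [h2']
      _ = PowerSeries.C (n:ℂ) * PowerSeries.X * expPS ((n : ℂ) * q) *
            ((PowerSeries.C lam * expPS 1) ^ j) := by
          rw [mul_pow, expPS_pow]; ring
      _ = _ := by rw [hE]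
  set S := ∑ j ∈ Finset.range n, (PowerSeries.C lam) ^ j * G j with hS
  have hsum : (E ^ n - 1) * S
      = PowerSeries.C (n:ℂ) * PowerSeries.X * expPS ((n : ℂ) * q) * ∑ j ∈ Finset.range n, E ^ j := by
    rw [hS, Finset.mul_sum, Finset.mul_sum]
    exact Finset.sum_congr rfl fun j _ => key j
  -- multiply by A and use geom_sum_mul
  have hAS : (E ^ n - 1) * (A * S)
      = (E ^ n - 1) * (PowerSeries.C (n:ℂ) * PowerSeries.X * expPS ((n : ℂ) * q)) := by
    calc (E ^ n - 1) * (A * S) = A * ((E ^ n - 1) * S) := by ring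
      _ = PowerSeries.C (n:ℂ) * PowerSeries.X * expPS ((n : ℂ) * q) *
            ((∑ j ∈ Finset.range n, E ^ j) * (E - 1)) := by rw [hsum, hA]; ring
      _ = _ := by rw [geom_sum_mul]; ring
  have hAS2 : A * S = PowerSeries.C (n:ℂ) * PowerSeries.X * expPS ((n : ℂ) * q) :=
    mul_left_cancel₀ hEn0 hAS
  have hmain : S = PowerSeries.C (n:ℂ) * PowerSeries.mk (fun m => B m ((n:ℂ)*q) lam / m.factorial) := by
    apply mul_left_cancel₀ hA0
    rw [hAS2, hA, hE]
    linear_combination (-(PowerSeries.C (n:ℂ))) * hB ((n:ℂ)*q) lam hlam1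
  -- compare coefficients at m
  have hcoeff' : ∀ j ∈ Finset.range n,
      (PowerSeries.coeff m) ((PowerSeries.C lam) ^ j * G j)
        = lam ^ j * ((n:ℂ) ^ m * (B m (q + j / n) (lam ^ n) / m.factorial)) := by
    intro j _
    rw [← map_pow, PowerSeries.coeff_C_mul, hG]
    simp [PowerSeries.coeff_rescale]
  have hc := congrArg (PowerSeries.coeff m) hmain
  rw [hS, map_sum, PowerSeries.coeff_C_mul, PowerSeries.coeff_mk,
    Finset.sum_congr rfl hcoeff'] at hc
  have hm0 : (m.factorial : ℂ) ≠ 0 := Nat.cast_ne_zero.mpr m.factorial_ne_zero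
  have hc2 : (n:ℂ) ^ m * ∑ j ∈ Finset.range n, lam ^ j * B m (q + j / n) (lam ^ n)
      = (n:ℂ) * B m ((n:ℂ) * q) lam := by
    have step : ∀ j ∈ Finset.range n, (n:ℂ) ^ m * (lam ^ j * B m (q + j / n) (lam ^ n))
        = (lam ^ j * ((n:ℂ) ^ m * (B m (q + j / n) (lam ^ n) / m.factorial))) * m.factorial := by
      intro j _
      field_simp
    rw [Finset.mul_sum, Finset.sum_congr rfl step, ← Finset.sum_mul, hc]
    field_simp
  have hfin : B m ((n:ℂ) * q) lam
      = (n:ℂ)⁻¹ * ((n:ℂ) ^ m * ∑ j ∈ Finset.range n, lam ^ j * B m (q + j / n) (lam ^ n)) := by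
    rw [hc2]
    field_simp
  rw [hfin, zpow_sub_one₀ hn0, zpow_natCast]
  ring
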